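/- Fix a period L > 0 and admissible nonlinearities f₁, f₂ with zeros a₁, a₂. Set f̲₂(u) := min_{x∈[0,L]} f₂(u,x), f̄₂(u) := max_{x∈[0,L]} f₂(u,x) (admissible, independent of the second variable), θ̲ := Θ(0, f̲₂), θ̄ := Θ(0, f̄₂), and for x ∈ ℝ set Θ₁(x) := Θ(x, (u,y) ↦ f₁(u, 2x − y)). Then 0 < inf_{x∈[0,L]} Θ₁(x) ≤ sup_{x∈[0,L]} Θ₁(x) < +∞, and, defining r̲ := ( θ̲ / sup_{x∈[0,L]} Θ₁(x) )² and r̄ := ( θ̄ / inf_{x∈[0,L]} Θ₁(x) )², the following holds for all d, α > 0: (i) if there exists x ∈ [0,L) with α Θ₁(x) ≥ Θ(x, (u,y) ↦ (1/d) f₂(u/d, y)), then α²/d ≥ r̲; (ii) if there exists x ∈ [0,L) with α Θ₁(x) ≤ Θ(x, (u,y) ↦ (1/d) f₂(u/d, y)), then α²/d ≤ r̄. In particular, if both conditions hold (i.e. the sets X⁺_{(d,α)} and X⁻_{(d,α)} of the paper are both nonempty), then r̲ ≤ α²/d ≤ r̄. -/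

import Mathlib

open MeasureTheory Set Filter Topology Function

noncomputable section

/-- An admissible nonlinearity with period `L` and zero `a`:
`f` is `C¹`, `L`-periodic in its second variable, positive at `u = 0` uniformly in `x`,
decreasing in its first variable, and vanishes at `u = a` for all `x`. -/
structure Admissible (L : ℝ) (f : ℝ → ℝ → ℝ) (a : ℝ) : Prop where
  smooth : ContDiff ℝ 1 (uncurry f)
  periodic : ∀ u x, f u (x + L) = f u x
  pos_at_zero : ∃ m > 0, ∀ x, m ≤ f 0 x
  strict_anti : ∀ x, StrictAnti (fun u => f u x)
  zero_pos : 0 < a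
  zero_root : ∀ x, f a x = 0

/-- `Zfun s φ t x = φ (x - s t, x)`. -/
def Zfun (s : ℝ) (φ : ℝ → ℝ → ℝ) : ℝ → ℝ → ℝ := fun t x => φ (x - s * t) x

/-- A regular segregated pulsating front with speed `s` and profile `φ`. -/
structure SegFront (L d α a₁ a₂ : ℝ) (f₁ f₂ : ℝ → ℝ → ℝ) (s : ℝ)
    (φ : ℝ → ℝ → ℝ) : Prop where
  cont : Continuous (uncurry φ)
  bdd : ∃ M, ∀ ξ x, |φ ξ x| ≤ M
  per : ∀ ξ x, φ ξ (x + L) = φ ξ x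
  mono : ∀ x, Antitone (fun ξ => φ ξ x)
  pos : ∃ ξ x, 0 < φ ξ x
  neg : ∃ ξ x, φ ξ x < 0
  lim_left : ∀ ε > 0, ∃ M, ∀ ξ, M ≤ ξ → ∀ x ∈ Icc (0:ℝ) L, |φ (-ξ) x - α * a₁| < ε
  lim_right : ∀ ε > 0, ∃ M, ∀ ξ, M ≤ ξ → ∀ x ∈ Icc (0:ℝ) L, |φ ξ x + d * a₂| < ε
  pde : ∃ zt zx zxx : ℝ → ℝ → ℝ,
    (∀ t x, Zfun s φ t x ≠ 0 → HasDerivAt (fun τ => Zfun s φ τ x) (zt t x) t) ∧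
    (∀ t x, Zfun s φ t x ≠ 0 → HasDerivAt (fun y => Zfun s φ t y) (zx t x) x) ∧
    (∀ t x, Zfun s φ t x ≠ 0 → HasDerivAt (fun y => zx t y) (zxx t x) x) ∧
    ContinuousOn (uncurry zt) {p : ℝ × ℝ | Zfun s φ p.1 p.2 ≠ 0} ∧
    ContinuousOn (uncurry zx) {p : ℝ × ℝ | Zfun s φ p.1 p.2 ≠ 0} ∧
    ContinuousOn (uncurry zxx) {p : ℝ × ℝ | Zfun s φ p.1 p.2 ≠ 0} ∧
    (∀ t x, 0 < Zfun s φ t x →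
      zt t x = zxx t x + Zfun s φ t x * f₁ (Zfun s φ t x / α) x) ∧
    (∀ t x, Zfun s φ t x < 0 →
      zt t x = d * zxx t x + Zfun s φ t x * f₂ (-(Zfun s φ t x) / d) x)

/-- The limiting nonlinearity `η(z, x)`. -/
def eta (d α : ℝ) (f₁ f₂ : ℝ → ℝ → ℝ) (z x : ℝ) : ℝ :=
  f₁ (z / α) x * max z 0 - (1 / d) * f₂ (-z / d) x * (-(min z 0))

/-- A segregated stationary equilibrium. -/
structure SegEquilibrium (L d α : ℝ) (f₁ f₂ : ℝ → ℝ → ℝ) (e : ℝ → ℝ) : Prop where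
  smooth : ContDiff ℝ 2 e
  bdd : ∃ M, ∀ x, |e x| ≤ M
  ode : ∀ x, -(deriv (deriv e) x) = eta d α f₁ f₂ (e x) x
  mono : ∀ x, Antitone (fun n : ℕ => e (x + n * L))
  pos : ∃ x, 0 < e x
  neg : ∃ x, e x < 0
  tail : BddBelow {x | e x < 0} ∨ BddAbove {x | 0 < e x}

/-- The Du–Lin solution on `[x₀, ∞)`: bounded, nonnegative, nonzero, `C²`, vanishing
at `x₀`, solving `-z'' = z f(z, ·)` on `(x₀, ∞)`. -/
structure IsDuLin (x₀ : ℝ) (f : ℝ → ℝ → ℝ) (z : ℝ → ℝ) : Prop where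
  diff1 : ∀ x ∈ Ici x₀, DifferentiableWithinAt ℝ z (Ici x₀) x
  diff2 : ∀ x ∈ Ici x₀,
    DifferentiableWithinAt ℝ (derivWithin z (Ici x₀)) (Ici x₀) x
  cont2 : ContinuousOn (derivWithin (derivWithin z (Ici x₀)) (Ici x₀)) (Ici x₀)
  bdd : ∃ M, ∀ x ∈ Ici x₀, |z x| ≤ M
  nonneg : ∀ x ∈ Ici x₀, 0 ≤ z x
  nonzero : ∃ x ∈ Ici x₀, z x ≠ 0
  zero_at : z x₀ = 0
  ode : ∀ x ∈ Ioi x₀,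
    -(derivWithin (derivWithin z (Ici x₀)) (Ici x₀) x) = z x * f (z x) x

/-- `∂ₜ` of a function of `(t, x)`. -/
def dT (u : ℝ → ℝ → ℝ) (t x : ℝ) : ℝ := deriv (fun τ => u τ x) t

/-- `∂ₓ` of a function of `(t, x)` (or of `(ξ, x)`). -/
def dX (u : ℝ → ℝ → ℝ) (t x : ℝ) : ℝ := deriv (fun y => u t y) x

/-- `∂ₓₓ` of a function of `(t, x)`. -/
def dXX (u : ℝ → ℝ → ℝ) (t x : ℝ) : ℝ := deriv (fun y => dX u t y) x

/-- `∂_ξ` of a profile. -/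
def dXi (φ : ℝ → ℝ → ℝ) (ξ x : ℝ) : ℝ := deriv (fun ζ => φ ζ x) ξ

/-- A pulsating front of the competition system `(P_k)`. -/
structure PkFront (L d α k a₁ a₂ : ℝ) (f₁ f₂ : ℝ → ℝ → ℝ) (c : ℝ)
    (φ₁ φ₂ : ℝ → ℝ → ℝ) : Prop where
  smooth1 : ContDiff ℝ 2 (uncurry φ₁)
  smooth2 : ContDiff ℝ 2 (uncurry φ₂)
  per1 : ∀ ξ x, φ₁ ξ (x + L) = φ₁ ξ x
  per2 : ∀ ξ x, φ₂ ξ (x + L) = φ₂ ξ x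
  mono1 : ∀ x, Antitone (fun ξ => φ₁ ξ x)
  mono2 : ∀ x, Monotone (fun ξ => φ₂ ξ x)
  pde1 : ∀ t x, dT (Zfun c φ₁) t x =
      dXX (Zfun c φ₁) t x + Zfun c φ₁ t x * f₁ (Zfun c φ₁ t x) x
        - k * Zfun c φ₁ t x * Zfun c φ₂ t x
  pde2 : ∀ t x, dT (Zfun c φ₂) t x =
      d * dXX (Zfun c φ₂) t x + Zfun c φ₂ t x * f₂ (Zfun c φ₂ t x) x
        - α * k * Zfun c φ₁ t x * Zfun c φ₂ t x
  lim_left : ∀ ε > 0, ∃ M, ∀ ξ, ξ ≤ M → ∀ x ∈ Icc (0:ℝ) L,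
      |φ₁ ξ x - a₁| < ε ∧ |φ₂ ξ x| < ε
  lim_right : ∀ ε > 0, ∃ M, ∀ ξ, M ≤ ξ → ∀ x ∈ Icc (0:ℝ) L,
      |φ₁ ξ x| < ε ∧ |φ₂ ξ x - a₂| < ε

/-- A positive pulsating front for the scalar equation `∂ₜ z = δ ∂ₓₓ z + z g(z, x)`
connecting `a` to `0` at speed `s`. -/
structure ScalarFront (L δ a : ℝ) (g : ℝ → ℝ → ℝ) (s : ℝ) (ψ : ℝ → ℝ → ℝ) : Prop where
  smooth : ContDiff ℝ 2 (uncurry ψ)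
  per : ∀ ξ x, ψ ξ (x + L) = ψ ξ x
  pos : ∀ ξ x, 0 < ψ ξ x
  pde : ∀ t x, dT (Zfun s ψ) t x =
      δ * dXX (Zfun s ψ) t x + Zfun s ψ t x * g (Zfun s ψ t x) x
  lim_left : ∀ ε > 0, ∃ M, ∀ ξ, ξ ≤ M → ∀ x ∈ Icc (0:ℝ) L, |ψ ξ x - a| < ε
  lim_right : ∀ ε > 0, ∃ M, ∀ ξ, M ≤ ξ → ∀ x ∈ Icc (0:ℝ) L, |ψ ξ x| < ε

/-- `σ(v) = 1` if `v > 0`, `1/d` if `v < 0` (the value at `0` is irrelevant). -/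
def sigmaFun (d v : ℝ) : ℝ := if 0 < v then 1 else if v < 0 then 1 / d else 0

/-- Extra regularity of a segregated pulsating front (established in the paper):
`z = Zfun s φ` is everywhere differentiable in `x` with `∂ₓ z` continuous on `ℝ²` and
negative on the zero set of `z`, and `∂ₜ z` exists off the zero set and has there the
strict sign of `s`. -/
def FrontRegular (s : ℝ) (φ zt zx : ℝ → ℝ → ℝ) : Prop :=
  (∀ t x, HasDerivAt (fun y => Zfun s φ t y) (zx t x) x) ∧
  Continuous (uncurry zx) ∧
  (∀ t x, Zfun s φ t x = 0 → zx t x < 0) ∧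
  (∀ t x, Zfun s φ t x ≠ 0 → HasDerivAt (fun τ => Zfun s φ τ x) (zt t x) t) ∧
  (0 < s → ∀ t x, Zfun s φ t x ≠ 0 → 0 < zt t x) ∧
  (s < 0 → ∀ t x, Zfun s φ t x ≠ 0 → zt t x < 0)


/-!
Every slope in the statement is controlled by an energy argument. A Du–Lin solution `z` of
`-z'' = z g(z, x)`, for a nonlinearity `g` of KPP type with zero `a`, is nondecreasing, stays
below `a`, and satisfies `z → a`, `z' → 0` at infinity. Along it,
`E = z'² + 2 ∫₀^z s h(s) ds` is nonincreasing when `h ≤ g` and nondecreasing when `h ≥ g`;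
comparing `E(x₀) = z'(x₀)²` with `E(∞) = 2 ∫₀^a s h(s) ds` for `h = min_x g` and `h = max_x g`
bounds `z'(x₀)²` between two integrals that do not depend on `x₀`. For `f₁` this keeps `Θ₁`
between two positive constants. For `(1/d) f₂(u/d, y)` both integrals are `d` times those of
`f₂`, so its slope lies between `√d θ̲` and `√d θ̄`; comparing it with `α Θ₁(x)` gives the
bounds on `α² / d`.
-/

lemma add_mul_sub_le_of_hasDerivAt {D : Set ℝ} (hD : Convex ℝ D) {f f' : ℝ → ℝ}
    (hf : ContinuousOn f D) (hf' : ∀ t ∈ interior D, HasDerivAt f (f' t) t) {k : ℝ}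
    (hk : ∀ t ∈ interior D, k ≤ f' t) {p t : ℝ} (hp : p ∈ D) (ht : t ∈ D)
    (hpt : p ≤ t) : f p + k * (t - p) ≤ f t := by
  have := hD.mul_sub_le_image_sub_of_le_deriv hf
    (fun s hs => (hf' s hs).differentiableAt.differentiableWithinAt)
    (fun s hs => (hf' s hs).deriv ▸ hk s hs) p hp t ht hpt
  linarith

lemma exists_gt_of_add_mul_le {f : ℝ → ℝ} {p k : ℝ} (hk : 0 < k)
    (hf : ∀ t ∈ Ici p, f p + k * (t - p) ≤ f t) (M : ℝ) : ∃ t ∈ Ici p, M < f t := by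
  set t := p + (|M - f p| + 1) / k
  have hkt : k * (t - p) = |M - f p| + 1 := by
    simp only [t, add_sub_cancel_left]
    field_simp
  have hpt : p ≤ t := le_add_of_nonneg_right (by positivity)
  refine ⟨t, hpt, ?_⟩
  linarith [hf t hpt, le_abs_self (M - f p)]

lemma exists_first_le {f : ℝ → ℝ} {p t c : ℝ} (hf : ContinuousOn f (Icc p t))
    (hpt : p ≤ t) (ht : f t ≤ c) :
    ∃ q ∈ Icc p t, f q ≤ c ∧ ∀ s ∈ Ico p q, c < f s := by
  set S := Icc p t ∩ f ⁻¹' Iic c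
  have hS : IsClosed S := hf.preimage_isClosed_of_isClosed isClosed_Icc isClosed_Iic
  have hS_bdd : BddBelow S := bddBelow_Icc.mono inter_subset_left
  obtain ⟨hq, hfq⟩ := hS.csInf_mem ⟨t, ⟨hpt, le_rfl⟩, ht⟩ hS_bdd
  refine ⟨sInf S, hq, hfq, fun s hs => not_le.1 fun hfs => ?_⟩
  exact hs.2.not_ge (csInf_le hS_bdd ⟨⟨hs.1, hs.2.le.trans hq.2⟩, hfs⟩)

lemma exists_last_le {f : ℝ → ℝ} {p t c : ℝ} (hf : ContinuousOn f (Icc p t))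
    (hpt : p ≤ t) (hp : f p ≤ c) :
    ∃ q ∈ Icc p t, f q ≤ c ∧ ∀ s ∈ Ioc q t, c < f s := by
  set S := Icc p t ∩ f ⁻¹' Iic c
  have hS : IsClosed S := hf.preimage_isClosed_of_isClosed isClosed_Icc isClosed_Iic
  have hS_bdd : BddAbove S := bddAbove_Icc.mono inter_subset_left
  obtain ⟨hq, hfq⟩ := hS.csSup_mem ⟨p, ⟨le_rfl, hpt⟩, hp⟩ hS_bdd
  refine ⟨sSup S, hq, hfq, fun s hs => not_le.1 fun hfs => ?_⟩
  exact hs.1.not_ge (le_csSup hS_bdd ⟨⟨hq.1.trans hs.1.le, hs.2⟩, hfs⟩)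

lemma MonotoneOn.exists_tendsto_atTop {f : ℝ → ℝ} {p : ℝ} (hf : MonotoneOn f (Ici p))
    (hb : BddAbove (f '' Ici p)) :
    ∃ l, Tendsto f atTop (𝓝 l) ∧ ∀ t ∈ Ici p, f t ≤ l := by
  have hmono : Monotone fun t => f (max t p) := fun s t hst =>
    hf (le_max_right s p) (le_max_right t p) (max_le_max hst le_rfl)
  have hrange : BddAbove (range fun t => f (max t p)) :=
    hb.mono (range_subset_iff.2 fun t => mem_image_of_mem f (le_max_right t p))
  refine ⟨_, (tendsto_atTop_ciSup hmono hrange).congr' ?_, fun t ht => ?_⟩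
  · filter_upwards [eventually_ge_atTop p] with t ht
    rw [max_eq_left ht]
  · simpa [max_eq_left (mem_Ici.1 ht)] using le_ciSup hrange t

lemma Function.Periodic.le_of_isLeast_image_Icc {φ : ℝ → ℝ} {L m : ℝ}
    (hφ : Periodic φ L) (hL : 0 < L) (hm : IsLeast (φ '' Icc 0 L) m) (y : ℝ) : m ≤ φ y := by
  have hrange := hφ.image_Icc hL 0
  rw [zero_add] at hrange
  exact hm.2 (hrange ▸ mem_range_self y)

lemma Function.Periodic.le_of_isGreatest_image_Icc {φ : ℝ → ℝ} {L M : ℝ}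
    (hφ : Periodic φ L) (hL : 0 < L) (hM : IsGreatest (φ '' Icc 0 L) M) (y : ℝ) :
    φ y ≤ M := by
  have hrange := hφ.image_Icc hL 0
  rw [zero_add] at hrange
  exact hM.2 (hrange ▸ mem_range_self y)

lemma continuous_of_isLeast_image {f : ℝ → ℝ → ℝ} {K : Set ℝ} {l : ℝ → ℝ}
    (hK : IsCompact K) (hf : Continuous (uncurry f)) (hl : ∀ u, IsLeast (f u '' K) (l u)) :
    Continuous l := by
  convert hK.continuous_sInf hf using 2 with u
  exact (hl u).csInf_eq.symm

lemma continuous_of_isGreatest_image {f : ℝ → ℝ → ℝ} {K : Set ℝ} {l : ℝ → ℝ}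
    (hK : IsCompact K) (hf : Continuous (uncurry f)) (hl : ∀ u, IsGreatest (f u '' K) (l u)) :
    Continuous l := by
  convert hK.continuous_sSup hf using 2 with u
  exact (hl u).csSup_eq.symm

lemma integral_mul_comp_div {h : ℝ → ℝ} {d : ℝ} (hd : 0 < d) (a : ℝ) :
    ∫ s in (0 : ℝ)..d * a, s * (1 / d * h (s / d)) = d * ∫ s in (0 : ℝ)..a, s * h s := by
  have hpt : (fun s => s * (1 / d * h (s / d))) = fun s => (fun v => v * h v) (s / d) := by
    funext s
    field_simp
  rw [hpt, intervalIntegral.integral_comp_div (fun v => v * h v) hd.ne', zero_div,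
    mul_div_cancel_left₀ _ hd.ne', smul_eq_mul]

/-- What the Du–Lin estimates use of a nonlinearity with zero `a`. Unlike `Admissible`, this
also covers the envelopes `min_x f(u, x)` and `max_x f(u, x)`, which need not be `C¹`. -/
structure IsUniformKPP (g : ℝ → ℝ → ℝ) (a : ℝ) : Prop where
  zero_pos : 0 < a
  strict_anti : ∀ y, StrictAnti (g · y)
  zero_root : ∀ y, g a y = 0
  exists_pos_le : ∀ b < a, ∃ β > 0, ∀ y, β ≤ g b y

namespace IsUniformKPP

variable {g : ℝ → ℝ → ℝ} {a : ℝ}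

lemma pos (hg : IsUniformKPP g a) {u : ℝ} (hu : u < a) (y : ℝ) : 0 < g u y :=
  hg.zero_root y ▸ hg.strict_anti y hu

lemma nonneg (hg : IsUniformKPP g a) {u : ℝ} (hu : u ≤ a) (y : ℝ) : 0 ≤ g u y :=
  hg.zero_root y ▸ (hg.strict_anti y).antitone hu

lemma neg (hg : IsUniformKPP g a) {u : ℝ} (hu : a < u) (y : ℝ) : g u y < 0 :=
  hg.zero_root y ▸ hg.strict_anti y hu

lemma exists_pos_le_of_le (hg : IsUniformKPP g a) {b : ℝ} (hb : b < a) :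
    ∃ β > 0, ∀ u ≤ b, ∀ y, β ≤ g u y := by
  obtain ⟨β, hβ, hβg⟩ := hg.exists_pos_le b hb
  exact ⟨β, hβ, fun u hu y => (hβg y).trans ((hg.strict_anti y).antitone hu)⟩

lemma comp_right (hg : IsUniformKPP g a) (φ : ℝ → ℝ) :
    IsUniformKPP (fun u y => g u (φ y)) a where
  zero_pos := hg.zero_pos
  strict_anti y := hg.strict_anti (φ y)
  zero_root y := hg.zero_root (φ y)
  exists_pos_le b hb := by
    obtain ⟨β, hβ, hβg⟩ := hg.exists_pos_le b hb
    exact ⟨β, hβ, fun y => hβg (φ y)⟩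

lemma rescale (hg : IsUniformKPP g a) {d : ℝ} (hd : 0 < d) :
    IsUniformKPP (fun u y => 1 / d * g (u / d) y) (d * a) where
  zero_pos := mul_pos hd hg.zero_pos
  strict_anti y u v huv :=
    mul_lt_mul_of_pos_left (hg.strict_anti y (div_lt_div_of_pos_right huv hd)) (by positivity)
  zero_root y := by simp [mul_div_cancel_left₀ _ hd.ne', hg.zero_root]
  exists_pos_le b hb := by
    obtain ⟨β, hβ, hβg⟩ := hg.exists_pos_le (b / d) ((div_lt_iff₀' hd).2 hb)
    exact ⟨1 / d * β, by positivity,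
      fun y => mul_le_mul_of_nonneg_left (hβg y) (by positivity)⟩

lemma isLeast_envelope (hg : IsUniformKPP g a) {K : Set ℝ} {l : ℝ → ℝ}
    (hl : ∀ u, IsLeast (g u '' K) (l u)) : IsUniformKPP (fun u _ => l u) a where
  zero_pos := hg.zero_pos
  strict_anti _ u v huv := by
    show l v < l u
    obtain ⟨x, hx, hxl⟩ := (hl u).1
    exact hxl ▸ ((hl v).2 (mem_image_of_mem _ hx)).trans_lt (hg.strict_anti x huv)
  zero_root _ := by
    obtain ⟨x, -, hxl⟩ := (hl a).1
    rw [← hxl, hg.zero_root]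
  exists_pos_le b hb := by
    obtain ⟨x, -, hxl⟩ := (hl b).1
    exact ⟨l b, hxl ▸ hg.pos hb x, fun _ => le_rfl⟩

lemma isGreatest_envelope (hg : IsUniformKPP g a) {K : Set ℝ} {l : ℝ → ℝ}
    (hl : ∀ u, IsGreatest (g u '' K) (l u)) : IsUniformKPP (fun u _ => l u) a where
  zero_pos := hg.zero_pos
  strict_anti _ u v huv := by
    show l v < l u
    obtain ⟨x, hx, hxl⟩ := (hl v).1
    exact hxl ▸ (hg.strict_anti x huv).trans_le ((hl u).2 (mem_image_of_mem _ hx))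
  zero_root _ := by
    obtain ⟨x, -, hxl⟩ := (hl a).1
    rw [← hxl, hg.zero_root]
  exists_pos_le b hb := by
    obtain ⟨x, -, hxl⟩ := (hl b).1
    exact ⟨l b, hxl ▸ hg.pos hb x, fun _ => le_rfl⟩

end IsUniformKPP

lemma Admissible.isUniformKPP {L a : ℝ} {f : ℝ → ℝ → ℝ} (hf : Admissible L f a)
    (hL : 0 < L) : IsUniformKPP f a where
  zero_pos := hf.zero_pos
  strict_anti := hf.strict_anti
  zero_root := hf.zero_root
  exists_pos_le b hb := by
    obtain ⟨x, -, hx⟩ := isCompact_Icc.exists_isMinOn (nonempty_Icc.2 hL.le)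
      (hf.smooth.continuous.uncurry_left b).continuousOn
    refine ⟨f b x, hf.zero_root x ▸ hf.strict_anti x hb, fun y => ?_⟩
    obtain ⟨y', hy', hyy'⟩ := Periodic.exists_mem_Ico₀ (hf.periodic b) hL y
    exact hyy' ▸ hx (Ico_subset_Icc_self hy')

/-- For `g = h` independent of `x` this is the first integral of `-z'' = z h(z)`; in general
it varies with the sign of `h - g`. -/
def energy (x₀ : ℝ) (z h : ℝ → ℝ) (t : ℝ) : ℝ :=
  derivWithin z (Ici x₀) t ^ 2 + 2 * ∫ s in (0 : ℝ)..z t, s * h s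

namespace IsDuLin

variable {x₀ a : ℝ} {g : ℝ → ℝ → ℝ} {z h : ℝ → ℝ}

lemma continuousOn (hz : IsDuLin x₀ g z) : ContinuousOn z (Ici x₀) :=
  fun x hx => (hz.diff1 x hx).continuousWithinAt

lemma continuousOn_derivWithin (hz : IsDuLin x₀ g z) :
    ContinuousOn (derivWithin z (Ici x₀)) (Ici x₀) :=
  fun x hx => (hz.diff2 x hx).continuousWithinAt

lemma hasDerivAt (hz : IsDuLin x₀ g z) {x : ℝ} (hx : x₀ < x) :
    HasDerivAt z (derivWithin z (Ici x₀) x) x :=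
  (hz.diff1 x hx.le).hasDerivWithinAt.hasDerivAt (Ici_mem_nhds hx)

lemma hasDerivAt_derivWithin (hz : IsDuLin x₀ g z) {x : ℝ} (hx : x₀ < x) :
    HasDerivAt (derivWithin z (Ici x₀)) (-(z x * g (z x) x)) x := by
  rw [← hz.ode x hx, neg_neg]
  exact (hz.diff2 x hx.le).hasDerivWithinAt.hasDerivAt (Ici_mem_nhds hx)

lemma not_forall_add_mul_le (hz : IsDuLin x₀ g z) {p k : ℝ} (hp : x₀ ≤ p) (hk : 0 < k) :
    ¬ ∀ t ∈ Ici p, z p + k * (t - p) ≤ z t := by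
  intro h
  obtain ⟨M, hM⟩ := hz.bdd
  obtain ⟨t, ht, hMt⟩ := exists_gt_of_add_mul_le hk h M
  linarith [le_of_abs_le (hM t (hp.trans ht))]

lemma monotoneOn_derivWithin_of_gt (hz : IsDuLin x₀ g z) (hg : IsUniformKPP g a) {p q : ℝ}
    (hp : x₀ ≤ p) (hgt : ∀ s ∈ Ioo p q, a < z s) :
    MonotoneOn (derivWithin z (Ici x₀)) (Icc p q) := by
  refine monotoneOn_of_hasDerivWithinAt_nonneg (f' := fun s => -(z s * g (z s) s))
    (convex_Icc p q) (hz.continuousOn_derivWithin.mono fun s hs => hp.trans hs.1)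
    (fun s hs => ?_) (fun s hs => ?_)
  all_goals rw [interior_Icc] at hs
  · exact (hz.hasDerivAt_derivWithin (hp.trans_lt hs.1)).hasDerivWithinAt
  · exact neg_nonneg.2 (mul_nonpos_of_nonneg_of_nonpos (hz.nonneg s (hp.trans hs.1.le))
      (hg.neg (hgt s hs) s).le)

lemma add_mul_sub_le_of_gt (hz : IsDuLin x₀ g z) (hg : IsUniformKPP g a) {p q : ℝ}
    (hp : x₀ ≤ p) (hpq : p ≤ q) (hgt : ∀ s ∈ Ioo p q, a < z s) :
    z p + derivWithin z (Ici x₀) p * (q - p) ≤ z q := by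
  refine add_mul_sub_le_of_hasDerivAt (f' := derivWithin z (Ici x₀)) (convex_Icc p q)
    (hz.continuousOn.mono fun s hs => hp.trans hs.1) (fun s hs => ?_) (fun s hs => ?_)
    (left_mem_Icc.2 hpq) (right_mem_Icc.2 hpq) hpq
  all_goals rw [interior_Icc] at hs
  · exact hz.hasDerivAt (hp.trans_lt hs.1)
  · exact hz.monotoneOn_derivWithin_of_gt hg hp hgt (left_mem_Icc.2 hpq) (Ioo_subset_Icc_self hs)
      hs.1.le

/-- Where `z > a` the equation makes `z` convex, so a positive slope there only grows. -/
lemma gt_of_gt_of_derivWithin_pos (hz : IsDuLin x₀ g z) (hg : IsUniformKPP g a) {ξ : ℝ}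
    (hξ : x₀ ≤ ξ) (hzξ : a < z ξ) (hslope : 0 < derivWithin z (Ici x₀) ξ) :
    ∀ t ∈ Ici ξ, a < z t := by
  by_contra! ⟨t, ht, hzt⟩
  obtain ⟨c, hc, hzc, hgt⟩ :=
    exists_first_le (hz.continuousOn.mono fun s hs => hξ.trans hs.1) ht hzt
  have := hz.add_mul_sub_le_of_gt hg hξ hc.1 fun s hs => hgt s ⟨hs.1.le, hs.2⟩
  nlinarith [mul_nonneg hslope.le (sub_nonneg.2 hc.1)]

/-- Otherwise, after the last time `b` before `x₁` with `z b ≤ a`, the mean value theorem gives a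
point above `a` with positive slope, from where `z` grows at least linearly. -/
lemma apply_le (hz : IsDuLin x₀ g z) (hg : IsUniformKPP g a) : ∀ x ∈ Ici x₀, z x ≤ a := by
  by_contra! ⟨x₁, hx₁, hzx₁⟩
  obtain ⟨b, hb, hzb, hgt⟩ := exists_last_le (hz.continuousOn.mono Icc_subset_Ici_self) hx₁
    (hz.zero_at ▸ hg.zero_pos.le)
  have hbx₁ : b < x₁ := hb.2.lt_of_ne (by rintro rfl; linarith)
  obtain ⟨ξ, hξ, hslope⟩ := exists_hasDerivAt_eq_slope z (derivWithin z (Ici x₀)) hbx₁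
    (hz.continuousOn.mono fun s hs => hb.1.trans hs.1)
    (fun s hs => hz.hasDerivAt (hb.1.trans_lt hs.1))
  have hpos : 0 < derivWithin z (Ici x₀) ξ := hslope ▸ div_pos (by linarith) (by linarith)
  have hx₀ξ : x₀ ≤ ξ := hb.1.trans hξ.1.le
  have hgt' := hz.gt_of_gt_of_derivWithin_pos hg hx₀ξ (hgt ξ ⟨hξ.1, hξ.2.le⟩) hpos
  exact hz.not_forall_add_mul_le hx₀ξ hpos fun t ht =>
    hz.add_mul_sub_le_of_gt hg hx₀ξ ht fun s hs => hgt' s (mem_Ici.2 hs.1.le)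

lemma antitoneOn_derivWithin (hz : IsDuLin x₀ g z) (hg : IsUniformKPP g a) :
    AntitoneOn (derivWithin z (Ici x₀)) (Ici x₀) := by
  refine antitoneOn_of_hasDerivWithinAt_nonpos (f' := fun s => -(z s * g (z s) s))
    (convex_Ici x₀) hz.continuousOn_derivWithin (fun s hs => ?_) (fun s hs => ?_)
  all_goals rw [interior_Ici] at hs
  · exact (hz.hasDerivAt_derivWithin hs).hasDerivWithinAt
  · exact neg_nonpos.2 (mul_nonneg (hz.nonneg s (mem_Ici.2 hs.le))
      (hg.nonneg (hz.apply_le hg s (mem_Ici.2 hs.le)) s))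

lemma derivWithin_nonneg (hz : IsDuLin x₀ g z) (hg : IsUniformKPP g a) :
    ∀ x ∈ Ici x₀, 0 ≤ derivWithin z (Ici x₀) x := by
  by_contra! ⟨y, hy, hneg⟩
  have hgrowth : ∀ t ∈ Ici y, -z y + -derivWithin z (Ici x₀) y * (t - y) ≤ -z t := by
    intro t ht
    refine add_mul_sub_le_of_hasDerivAt (f := fun t => -z t)
      (f' := fun t => -derivWithin z (Ici x₀) t) (convex_Ici y)
      (hz.continuousOn.neg.mono (Ici_subset_Ici.2 hy)) (fun s hs => ?_) (fun s hs => ?_)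
      self_mem_Ici ht ht
    all_goals rw [interior_Ici] at hs
    · exact (hz.hasDerivAt (mem_Ici.1 hy |>.trans_lt hs)).neg
    · exact neg_le_neg (hz.antitoneOn_derivWithin hg hy (mem_Ici.2 (mem_Ici.1 hy |>.trans hs.le))
        hs.le)
  obtain ⟨t, ht, hzt⟩ := exists_gt_of_add_mul_le (f := fun t => -z t) (neg_pos.2 hneg) hgrowth 0
  linarith [hz.nonneg t (mem_Ici.2 (mem_Ici.1 hy |>.trans ht))]

lemma monotoneOn (hz : IsDuLin x₀ g z) (hg : IsUniformKPP g a) : MonotoneOn z (Ici x₀) := by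
  refine monotoneOn_of_hasDerivWithinAt_nonneg (f' := derivWithin z (Ici x₀)) (convex_Ici x₀)
    hz.continuousOn (fun s hs => ?_) (fun s hs => ?_)
  all_goals rw [interior_Ici] at hs
  · exact (hz.hasDerivAt hs).hasDerivWithinAt
  · exact hz.derivWithin_nonneg hg s (mem_Ici.2 hs.le)

lemma tendsto_derivWithin (hz : IsDuLin x₀ g z) (hg : IsUniformKPP g a) :
    Tendsto (derivWithin z (Ici x₀)) atTop (𝓝 0) := by
  obtain ⟨m, hm, hle⟩ :=
    MonotoneOn.exists_tendsto_atTop (f := fun t => -derivWithin z (Ici x₀) t)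
    (fun s hs t ht hst => neg_le_neg (hz.antitoneOn_derivWithin hg hs ht hst))
    ⟨0, forall_mem_image.2 fun t ht => neg_nonpos.2 (hz.derivWithin_nonneg hg t ht)⟩
  have hm0 : m ≤ 0 := le_of_tendsto hm (eventually_atTop.2
    ⟨x₀, fun t ht => neg_nonpos.2 (hz.derivWithin_nonneg hg t ht)⟩)
  obtain rfl : m = 0 := hm0.antisymm <| not_lt.1 fun hneg =>
    hz.not_forall_add_mul_le le_rfl (neg_pos.2 hneg) fun t ht => by
      refine add_mul_sub_le_of_hasDerivAt (f' := derivWithin z (Ici x₀)) (convex_Ici x₀)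
        hz.continuousOn (fun s hs => ?_) (fun s hs => ?_) self_mem_Ici ht ht
      all_goals rw [interior_Ici] at hs
      · exact hz.hasDerivAt hs
      · exact neg_le.1 (hle s (mem_Ici.2 hs.le))
  simpa using hm.neg

/-- If `z` stayed below `a`, then `-z'' = z g(z)` would stay bounded away from `0` and `z'` would
become negative. -/
lemma tendsto (hz : IsDuLin x₀ g z) (hg : IsUniformKPP g a) : Tendsto z atTop (𝓝 a) := by
  obtain ⟨l, hl, hle⟩ := (hz.monotoneOn hg).exists_tendsto_atTop
    ⟨a, forall_mem_image.2 (hz.apply_le hg)⟩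
  obtain ⟨x₁, hx₁, hzx₁⟩ := hz.nonzero
  have hl0 : 0 < l := ((hz.nonneg x₁ hx₁).lt_of_ne hzx₁.symm).trans_le (hle x₁ hx₁)
  have hla : l ≤ a := le_of_tendsto hl (eventually_atTop.2 ⟨x₀, hz.apply_le hg⟩)
  obtain rfl : l = a := hla.antisymm <| not_lt.1 fun hlt => by
    obtain ⟨β, hβ, hβg⟩ := hg.exists_pos_le_of_le hlt
    obtain ⟨y₁, hy₁⟩ := eventually_atTop.1 (hl.eventually (lt_mem_nhds (half_lt_self hl0)))
    set y := max y₁ x₀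
    have hgrowth : ∀ t ∈ Ici y, -derivWithin z (Ici x₀) y + l / 2 * β * (t - y)
        ≤ -derivWithin z (Ici x₀) t := fun t ht => by
      refine add_mul_sub_le_of_hasDerivAt (f := fun t => -derivWithin z (Ici x₀) t)
        (f' := fun s => z s * g (z s) s) (convex_Ici y)
        (hz.continuousOn_derivWithin.neg.mono (Ici_subset_Ici.2 (le_max_right _ _)))
        (fun s hs => ?_) (fun s hs => ?_) self_mem_Ici ht ht
      all_goals rw [interior_Ici] at hs
      · simpa using (hz.hasDerivAt_derivWithin ((le_max_right _ _).trans_lt hs)).fun_neg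
      · have hs₀ : s ∈ Ici x₀ := mem_Ici.2 ((le_max_right _ _).trans hs.le)
        exact mul_le_mul (hy₁ s ((le_max_left _ _).trans hs.le)).le (hβg _ (hle s hs₀) s)
          hβ.le (hz.nonneg s hs₀)
    obtain ⟨t, ht, hzt⟩ := exists_gt_of_add_mul_le (f := fun t => -derivWithin z (Ici x₀) t)
      (mul_pos (half_pos hl0) hβ) hgrowth 0
    linarith [hz.derivWithin_nonneg hg t (mem_Ici.2 ((le_max_right _ _).trans ht))]
  exact hl

lemma energy_self (hz : IsDuLin x₀ g z) :
    energy x₀ z h x₀ = derivWithin z (Ici x₀) x₀ ^ 2 := by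
  simp [energy, hz.zero_at]

lemma continuousOn_energy (hz : IsDuLin x₀ g z) (hh : Continuous h) :
    ContinuousOn (energy x₀ z h) (Ici x₀) :=
  (hz.continuousOn_derivWithin.pow 2).add (continuousOn_const.mul
    ((intervalIntegral.continuous_primitive (μ := volume)
      (fun _ _ => (continuous_id.mul hh).intervalIntegrable _ _) 0).comp_continuousOn
        hz.continuousOn))

lemma hasDerivAt_energy (hz : IsDuLin x₀ g z) (hh : Continuous h) {t : ℝ} (ht : x₀ < t) :
    HasDerivAt (energy x₀ z h)
      (2 * derivWithin z (Ici x₀) t * (z t * (h (z t) - g (z t) t))) t := by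
  have hprim : HasDerivAt (fun u => ∫ s in (0 : ℝ)..u, s * h s) (z t * h (z t)) (z t) :=
    ((continuous_id.mul hh).integral_hasStrictDerivAt 0 (z t)).hasDerivAt
  refine (((hz.hasDerivAt_derivWithin ht).pow 2).add
    ((hprim.comp t (hz.hasDerivAt ht)).const_mul 2)).congr_deriv ?_
  push_cast
  ring

lemma tendsto_energy (hz : IsDuLin x₀ g z) (hg : IsUniformKPP g a) (hh : Continuous h) :
    Tendsto (energy x₀ z h) atTop (𝓝 (2 * ∫ s in (0 : ℝ)..a, s * h s)) := by
  have hprim := intervalIntegral.continuous_primitive (μ := volume)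
    (fun _ _ => (continuous_id.mul hh).intervalIntegrable _ _) 0
  have hlim := ((hz.tendsto_derivWithin hg).pow 2).add
    (((hprim.tendsto a).comp (hz.tendsto hg)).const_mul 2)
  rw [zero_pow two_ne_zero, zero_add] at hlim
  exact hlim

lemma integral_le_sq_derivWithin (hz : IsDuLin x₀ g z) (hg : IsUniformKPP g a)
    (hh : Continuous h) (hhg : ∀ u y, 0 ≤ u → u ≤ a → h u ≤ g u y) :
    2 * ∫ s in (0 : ℝ)..a, s * h s ≤ derivWithin z (Ici x₀) x₀ ^ 2 := by
  have hanti : AntitoneOn (energy x₀ z h) (Ici x₀) := by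
    refine antitoneOn_of_hasDerivWithinAt_nonpos
      (f' := fun t => 2 * derivWithin z (Ici x₀) t * (z t * (h (z t) - g (z t) t)))
      (convex_Ici x₀) (hz.continuousOn_energy hh)
      (fun t ht => ?_) (fun t ht => ?_)
    all_goals rw [interior_Ici] at ht
    · exact (hz.hasDerivAt_energy hh ht).hasDerivWithinAt
    · have ht' : t ∈ Ici x₀ := mem_Ici.2 ht.le
      exact mul_nonpos_of_nonneg_of_nonpos
        (mul_nonneg zero_le_two (hz.derivWithin_nonneg hg t ht'))
        (mul_nonpos_of_nonneg_of_nonpos (hz.nonneg t ht')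
          (sub_nonpos.2 (hhg _ t (hz.nonneg t ht') (hz.apply_le hg t ht'))))
  rw [← hz.energy_self]
  exact le_of_tendsto (hz.tendsto_energy hg hh)
    (eventually_atTop.2 ⟨x₀, fun t ht => hanti self_mem_Ici ht ht⟩)

lemma sq_derivWithin_le_integral (hz : IsDuLin x₀ g z) (hg : IsUniformKPP g a)
    (hh : Continuous h) (hgh : ∀ u y, 0 ≤ u → u ≤ a → g u y ≤ h u) :
    derivWithin z (Ici x₀) x₀ ^ 2 ≤ 2 * ∫ s in (0 : ℝ)..a, s * h s := by
  have hmono : MonotoneOn (energy x₀ z h) (Ici x₀) := by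
    refine monotoneOn_of_hasDerivWithinAt_nonneg
      (f' := fun t => 2 * derivWithin z (Ici x₀) t * (z t * (h (z t) - g (z t) t)))
      (convex_Ici x₀) (hz.continuousOn_energy hh)
      (fun t ht => ?_) (fun t ht => ?_)
    all_goals rw [interior_Ici] at ht
    · exact (hz.hasDerivAt_energy hh ht).hasDerivWithinAt
    · have ht' : t ∈ Ici x₀ := mem_Ici.2 ht.le
      exact mul_nonneg (mul_nonneg zero_le_two (hz.derivWithin_nonneg hg t ht'))
        (mul_nonneg (hz.nonneg t ht')
          (sub_nonneg.2 (hgh _ t (hz.nonneg t ht') (hz.apply_le hg t ht'))))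
  rw [← hz.energy_self]
  exact ge_of_tendsto (hz.tendsto_energy hg hh)
    (eventually_atTop.2 ⟨x₀, fun t ht => hmono self_mem_Ici ht ht⟩)

end IsDuLin

namespace Admissible

variable {L a : ℝ} {f : ℝ → ℝ → ℝ}

lemma exists_bounds_derivWithin (hf : Admissible L f a) (hL : 0 < L) :
    ∃ c > 0, ∃ C, ∀ x (φ : ℝ → ℝ) z, IsDuLin x (fun u y => f u (φ y)) z →
      c ≤ derivWithin z (Ici x) x ∧ derivWithin z (Ici x) x ≤ C := by
  have hK := hf.isUniformKPP hL
  have hfc : Continuous (uncurry f) := hf.smooth.continuous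
  have hK_img : ∀ u, IsCompact (f u '' Icc 0 L) := fun u =>
    isCompact_Icc.image (hfc.uncurry_left u)
  have hne : ∀ u, (f u '' Icc 0 L).Nonempty := fun u => (nonempty_Icc.2 hL.le).image _
  have hm : ∀ u, IsLeast (f u '' Icc 0 L) (sInf (f u '' Icc 0 L)) := fun u =>
    (hK_img u).isLeast_sInf (hne u)
  have hM : ∀ u, IsGreatest (f u '' Icc 0 L) (sSup (f u '' Icc 0 L)) := fun u =>
    (hK_img u).isGreatest_sSup (hne u)
  have hmc := continuous_of_isLeast_image isCompact_Icc hfc hm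
  have hint_pos : 0 < ∫ s in (0 : ℝ)..a, s * sInf (f s '' Icc 0 L) :=
    intervalIntegral.intervalIntegral_pos_of_pos_on ((continuous_id.mul hmc).intervalIntegrable _ _)
      (fun s hs => mul_pos hs.1 ((hK.isLeast_envelope hm).pos hs.2 0)) hK.zero_pos
  refine ⟨√(2 * ∫ s in (0 : ℝ)..a, s * sInf (f s '' Icc 0 L)), by positivity,
    √(2 * ∫ s in (0 : ℝ)..a, s * sSup (f s '' Icc 0 L)), fun x φ z hz => ?_⟩
  have hzK := hK.comp_right φ
  have hz0 := hz.derivWithin_nonneg hzK x self_mem_Ici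
  have hMc := continuous_of_isGreatest_image isCompact_Icc hfc hM
  refine ⟨Real.sqrt_le_iff.2 ⟨hz0, hz.integral_le_sq_derivWithin hzK hmc fun u y _ _ => ?_⟩,
    Real.le_sqrt_of_sq_le (hz.sq_derivWithin_le_integral hzK hMc fun u y _ _ => ?_)⟩
  · exact Periodic.le_of_isLeast_image_Icc (hf.periodic u) hL (hm u) (φ y)
  · exact Periodic.le_of_isGreatest_image_Icc (hf.periodic u) hL (hM u) (φ y)

lemma mul_sq_derivWithin_le_of_isLeast (hf : Admissible L f a) (hL : 0 < L) {l zl w : ℝ → ℝ}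
    {x₁ x d : ℝ} (hl : ∀ u, IsLeast (f u '' Icc 0 L) (l u))
    (hzl : IsDuLin x₁ (fun u _ => l u) zl) (hd : 0 < d)
    (hw : IsDuLin x (fun u y => 1 / d * f (u / d) y) w) :
    d * derivWithin zl (Ici x₁) x₁ ^ 2 ≤ derivWithin w (Ici x) x ^ 2 := by
  have hK := hf.isUniformKPP hL
  have hlc := continuous_of_isLeast_image isCompact_Icc hf.smooth.continuous hl
  calc d * derivWithin zl (Ici x₁) x₁ ^ 2
      ≤ d * (2 * ∫ s in (0 : ℝ)..a, s * l s) := mul_le_mul_of_nonneg_left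
        (hzl.sq_derivWithin_le_integral (hK.isLeast_envelope hl) hlc fun _ _ _ _ => le_rfl)
        hd.le
    _ = 2 * ∫ s in (0 : ℝ)..d * a, s * (1 / d * l (s / d)) := by
        rw [integral_mul_comp_div hd]
        ring
    _ ≤ derivWithin w (Ici x) x ^ 2 := hw.integral_le_sq_derivWithin (hK.rescale hd)
        (by fun_prop) fun u y _ _ => mul_le_mul_of_nonneg_left
          (Periodic.le_of_isLeast_image_Icc (hf.periodic _) hL (hl _) y) (by positivity)

lemma sq_derivWithin_le_mul_of_isGreatest (hf : Admissible L f a) (hL : 0 < L)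
    {l zl w : ℝ → ℝ} {x₁ x d : ℝ} (hl : ∀ u, IsGreatest (f u '' Icc 0 L) (l u))
    (hzl : IsDuLin x₁ (fun u _ => l u) zl) (hd : 0 < d)
    (hw : IsDuLin x (fun u y => 1 / d * f (u / d) y) w) :
    derivWithin w (Ici x) x ^ 2 ≤ d * derivWithin zl (Ici x₁) x₁ ^ 2 := by
  have hK := hf.isUniformKPP hL
  have hlc := continuous_of_isGreatest_image isCompact_Icc hf.smooth.continuous hl
  calc derivWithin w (Ici x) x ^ 2
      ≤ 2 * ∫ s in (0 : ℝ)..d * a, s * (1 / d * l (s / d)) :=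
        hw.sq_derivWithin_le_integral (hK.rescale hd) (by fun_prop) fun u y _ _ =>
          mul_le_mul_of_nonneg_left
            (Periodic.le_of_isGreatest_image_Icc (hf.periodic _) hL (hl _) y) (by positivity)
    _ = d * (2 * ∫ s in (0 : ℝ)..a, s * l s) := by
        rw [integral_mul_comp_div hd]
        ring
    _ ≤ d * derivWithin zl (Ici x₁) x₁ ^ 2 := mul_le_mul_of_nonneg_left
        (hzl.integral_le_sq_derivWithin (hK.isGreatest_envelope hl) hlc fun _ _ _ _ => le_rfl)
        hd.le

end Admissible

/-- the explicit `d`-independent bounds `r̲ ≤ α²/d ≤ r̄` on the range of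
parameters for which the sets `X⁺_{(d,α)}`, `X⁻_{(d,α)}` are nonempty. Here
`Θ₁ x = Θ(x, (u,y) ↦ f₁(u, 2x - y))`, `θ̲ = Θ(0, f̲₂)`, `θ̄ = Θ(0, f̄₂)`,
`r̲ = (θ̲ / sup Θ₁)²` and `r̄ = (θ̄ / inf Θ₁)²`. -/
theorem parameter_range_bounds
    (L : ℝ) (hL : 0 < L)
    (f₁ f₂ : ℝ → ℝ → ℝ) (a₁ a₂ : ℝ)
    (hf₁ : Admissible L f₁ a₁) (hf₂ : Admissible L f₂ a₂)
    (fl fu : ℝ → ℝ)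
    (hfl : ∀ u : ℝ, IsLeast {v : ℝ | ∃ x ∈ Icc (0 : ℝ) L, f₂ u x = v} (fl u))
    (hfu : ∀ u : ℝ, IsGreatest {v : ℝ | ∃ x ∈ Icc (0 : ℝ) L, f₂ u x = v} (fu u))
    (zl zu : ℝ → ℝ)
    (hzl : IsDuLin 0 (fun u _ => fl u) zl)
    (hzu : IsDuLin 0 (fun u _ => fu u) zu)
    (Θ₁ : ℝ → ℝ) (zfam : ℝ → ℝ → ℝ)
    (hfam : ∀ x : ℝ, IsDuLin x (fun u y => f₁ u (2 * x - y)) (zfam x))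
    (hΘ₁ : ∀ x : ℝ, Θ₁ x = derivWithin (zfam x) (Ici x) x) :
    BddAbove (Θ₁ '' Icc (0 : ℝ) L) ∧
    0 < sInf (Θ₁ '' Icc (0 : ℝ) L) ∧
    sInf (Θ₁ '' Icc (0 : ℝ) L) ≤ sSup (Θ₁ '' Icc (0 : ℝ) L) ∧
    (∀ d α : ℝ, 0 < d → 0 < α →
      ((∃ x ∈ Ico (0 : ℝ) L, ∃ w : ℝ → ℝ,
          IsDuLin x (fun u y => (1 / d) * f₂ (u / d) y) w ∧
          derivWithin w (Ici x) x ≤ α * Θ₁ x) →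
        (derivWithin zl (Ici (0 : ℝ)) 0 / sSup (Θ₁ '' Icc (0 : ℝ) L)) ^ 2
          ≤ α ^ 2 / d) ∧
      ((∃ x ∈ Ico (0 : ℝ) L, ∃ w : ℝ → ℝ,
          IsDuLin x (fun u y => (1 / d) * f₂ (u / d) y) w ∧
          α * Θ₁ x ≤ derivWithin w (Ici x) x) →
        α ^ 2 / d
          ≤ (derivWithin zu (Ici (0 : ℝ)) 0 / sInf (Θ₁ '' Icc (0 : ℝ) L)) ^ 2)) := by
  obtain ⟨c, hc, C, hbounds⟩ := hf₁.exists_bounds_derivWithin hL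
  have hΘ : ∀ x, c ≤ Θ₁ x ∧ Θ₁ x ≤ C := fun x =>
    hΘ₁ x ▸ hbounds x (fun y => 2 * x - y) (zfam x) (hfam x)
  set S := Θ₁ '' Icc 0 L
  have hne : S.Nonempty := (nonempty_Icc.2 hL.le).image Θ₁
  have hbddAbove : BddAbove S := ⟨C, forall_mem_image.2 fun x _ => (hΘ x).2⟩
  have hbddBelow : BddBelow S := ⟨c, forall_mem_image.2 fun x _ => (hΘ x).1⟩
  have hinf_pos : 0 < sInf S := hc.trans_le (le_csInf hne (forall_mem_image.2 fun x _ => (hΘ x).1))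
  have hinf_sup : sInf S ≤ sSup S := csInf_le_csSup hne hbddBelow hbddAbove
  have hmem : ∀ x ∈ Ico 0 L, Θ₁ x ∈ S := fun x hx =>
    mem_image_of_mem _ (Ico_subset_Icc_self hx)
  refine ⟨hbddAbove, hinf_pos, hinf_sup, fun d α hd _ => ⟨?_, ?_⟩⟩
  · rintro ⟨x, hx, w, hw, hle⟩
    have hw0 := hw.derivWithin_nonneg ((hf₂.isUniformKPP hL).rescale hd) x self_mem_Ici
    rw [div_pow, div_le_div_iff₀ (pow_pos (hinf_pos.trans_le hinf_sup) 2) hd, ← mul_pow]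
    calc derivWithin zl (Ici 0) 0 ^ 2 * d
        ≤ derivWithin w (Ici x) x ^ 2 := by
          linarith [hf₂.mul_sq_derivWithin_le_of_isLeast hL hfl hzl hd hw]
      _ ≤ (α * sSup S) ^ 2 := by
          gcongr
          exact hle.trans (by gcongr; exact le_csSup hbddAbove (hmem x hx))
  · rintro ⟨x, hx, w, hw, hle⟩
    rw [div_pow, div_le_div_iff₀ hd (pow_pos hinf_pos 2), ← mul_pow]
    calc (α * sInf S) ^ 2
        ≤ derivWithin w (Ici x) x ^ 2 := by
          gcongr
          exact le_trans (by gcongr; exact csInf_le hbddBelow (hmem x hx)) hle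
      _ ≤ derivWithin zu (Ici 0) 0 ^ 2 * d := by
          linarith [hf₂.sq_derivWithin_le_mul_of_isGreatest hL hfu hzu hd hw]
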